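/- arXiv:2309.01857 — 4 statements merged into one kernel-verified Lean document; each statement's English description precedes it below -/
import Mathlib

section
/- Let F be a graph with chromatic number χ(F) = k+1, where k+1 > r ≥ 2. Then ex_r(n, F^{(r)+}) = ex(n, K_r, F) + O(n^{r−1}); precisely, there is a constant C = C(F, r) such that for every n, ex(n, K_r, F) ≤ ex_r(n, F^{(r)+}) ≤ ex(n, K_r, F) + C·n^{r−1}. -/
open Finset
open scoped Classical

/-- An `r`-uniform hypergraph on vertex type `V`: a finite set of `r`-element
vertex subsets, the hyperedges. -/
structure HyperGraph (V : Type*) (r : ℕ) where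
  edges : Finset (Finset V)
  uniform : ∀ e ∈ edges, e.card = r

namespace HyperGraph

variable {V α : Type*}

/-- A witness that the `r`-graph `G` contains a copy of the `r`-uniform expansion
`F^{(r)+}` of the graph `F`, with core embedding `φ` and, for each edge of `F`, a set
of `r - 2` expansion vertices given by `S`.  The expansion vertices avoid the core and
are pairwise disjoint over distinct edges. -/
def IsExpansionWitness [DecidableEq V] {r : ℕ} (G : HyperGraph V r) (F : SimpleGraph α)
    (φ : α ↪ V) (S : Sym2 α → Finset V) : Prop :=
  (∀ a b, F.Adj a b → (S s(a, b)).card = r - 2) ∧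
  (∀ a b, F.Adj a b → ∀ x ∈ S s(a, b), x ∉ Set.range φ) ∧
  (∀ e ∈ F.edgeSet, ∀ e' ∈ F.edgeSet, e ≠ e' → Disjoint (S e) (S e')) ∧
  (∀ a b, F.Adj a b → insert (φ a) (insert (φ b) (S s(a, b))) ∈ G.edges)

/-- The `r`-graph `G` contains a copy of the expansion `F^{(r)+}` (i.e. a subhypergraph
isomorphic to it). -/
def ContainsExpansion [DecidableEq V] {r : ℕ} (G : HyperGraph V r) (F : SimpleGraph α) : Prop :=
  ∃ φ S, G.IsExpansionWitness F φ S

end HyperGraph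

/-- `ex_r(n, F^{(r)+})`: the maximum number of hyperedges in an `n`-vertex
`F^{(r)+}`-free `r`-graph. -/
noncomputable def exExpansion (r n : ℕ) {α : Type*} (F : SimpleGraph α) : ℕ :=
  sSup {m | ∃ G : HyperGraph (Fin n) r, ¬ G.ContainsExpansion F ∧ G.edges.card = m}

/-- `F` is contained in `G` as a (not necessarily induced) subgraph. -/
def GraphContains {α β : Type*} (F : SimpleGraph α) (G : SimpleGraph β) : Prop :=
  ∃ f : α ↪ β, ∀ a b, F.Adj a b → G.Adj (f a) (f b)

/-- The number of copies of `K_r` (i.e. `r`-cliques) in the graph `G`. -/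
noncomputable def cliqueCount {V : Type*} [Fintype V] (G : SimpleGraph V) (r : ℕ) : ℕ :=
  Nat.card {s : Finset V // G.IsNClique r s}

/-- The generalized Turán number `ex(n, K_r, F)`: the maximum number of `r`-cliques
in an `n`-vertex `F`-free graph. -/
noncomputable def exClique (n r : ℕ) {α : Type*} (F : SimpleGraph α) : ℕ :=
  sSup {m | ∃ G : SimpleGraph (Fin n), ¬ GraphContains F G ∧ cliqueCount G r = m}

/-- The number of copies of the complete `p`-uniform hypergraph `K_r^p` in a `p`-graph `G`:
the number of `r`-element vertex sets all of whose `p`-subsets are hyperedges. -/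
noncomputable def hyperCliqueCount {V : Type*} [Fintype V] {p : ℕ} (G : HyperGraph V p)
    (r : ℕ) : ℕ :=
  Nat.card {R : Finset V // R.card = r ∧ ∀ e ⊆ R, e.card = p → e ∈ G.edges}

/-- `ex_p(n, K_r^p, F^{(p)+})`: the maximum number of copies of `K_r^p` in an `n`-vertex
`F^{(p)+}`-free `p`-graph. -/
noncomputable def exHyperClique (p r n : ℕ) {α : Type*} (F : SimpleGraph α) : ℕ :=
  sSup {m | ∃ G : HyperGraph (Fin n) p, ¬ G.ContainsExpansion F ∧ hyperCliqueCount G r = m}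

/-- `G` contains (a subgraph isomorphic to) a member of the decomposition family `D(F)`:
a bipartite graph obtained from a proper `(k+1)`-coloring of `F` by deleting `k - 1`
color classes. -/
def ContainsDecompMember {α β : Type*} (F : SimpleGraph α) (k : ℕ) (G : SimpleGraph β) : Prop :=
  ∃ c : α → Fin (k + 1), (∀ a b, F.Adj a b → c a ≠ c b) ∧
    ∃ i j : Fin (k + 1), i ≠ j ∧ GraphContains (F.induce {a | c a = i ∨ c a = j}) G

/-- `biex(n, F)`: the maximum number of edges of an `n`-vertex graph containing no member
of the decomposition family `D(F)` (for a graph `F` of chromatic number `k+1`). -/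
noncomputable def biex (n : ℕ) {α : Type*} (F : SimpleGraph α) (k : ℕ) : ℕ :=
  sSup {m | ∃ G : SimpleGraph (Fin n), ¬ ContainsDecompMember F k G ∧ Nat.card G.edgeSet = m}

/-- `t_r(n,k)`: the number of hyperedges of the complete balanced `k`-partite `r`-graph
`T_r(n,k)` (realized on `Fin n` with the balanced partition `v ↦ v % k`). -/
noncomputable def turanHyperCount (r n k : ℕ) : ℕ :=
  Nat.card {e : Finset (Fin n) // e.card = r ∧
    Set.InjOn (fun v : Fin n => v.val % k) ↑e}

/-- `|E(T_r(n,k,i))|`: the number of hyperedges of the `r`-graph obtained from `T_r(n-i,k)`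
by adding `i` new vertices (here the vertices with value `< i`) and all `r`-sets containing
at least one of them. -/
noncomputable def turanPlusCount (r n k i : ℕ) : ℕ :=
  Nat.card {e : Finset (Fin n) // e.card = r ∧
    ((∃ v ∈ e, v.val < i) ∨ Set.InjOn (fun v : Fin n => (v.val - i) % k) ↑e)}

/-- `G` has a color-critical edge: an edge whose deletion decreases the chromatic number. -/
def HasColorCriticalEdge {β : Type*} (G : SimpleGraph β) : Prop :=
  ∃ a b, G.Adj a b ∧ (G.deleteEdges {s(a, b)}).chromaticNumber < G.chromaticNumber

/-- `B_{k+1,1}`: two copies of `K_{k+1}` sharing exactly one vertex (the vertex `k`). -/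
def bowtie (k : ℕ) : SimpleGraph (Fin (2 * k + 1)) :=
  SimpleGraph.fromRel (fun a b => (a.val ≤ k ∧ b.val ≤ k) ∨ (k ≤ a.val ∧ k ≤ b.val))

/-- The `r`-graph `H'(m)` on `n` vertices: a complete `k`-partite `r`-graph with one part
`V_1` of size `m` (the vertices with value `< m`) and `k-1` balanced parts on the remaining
vertices, together with all `r`-sets containing both `u` (the vertex `0`) and `v` (the
vertex `1`), and all `r`-sets containing `u` and `r-1` vertices outside `V_1`. -/
noncomputable def HprimeGraph (r n k m : ℕ) : HyperGraph (Fin n) r :=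
  ⟨Finset.univ.filter (fun e : Finset (Fin n) => e.card = r ∧
      (Set.InjOn (fun v : Fin n => if v.val < m then 0 else (v.val - m) % (k - 1) + 1) ↑e
        ∨ ((∃ a ∈ e, a.val = 0) ∧ (∃ b ∈ e, b.val = 1))
        ∨ ((∃ a ∈ e, a.val = 0) ∧ ∀ w ∈ e, w.val ≠ 0 → m ≤ w.val))),
    fun e he => ((Finset.mem_filter.mp he).2).1⟩

/-- `Δ*(t)G`: the `(r-1)`-graph of `t`-heavy `(r-1)`-sets, i.e. the `(r-1)`-element
vertex sets contained in at least `t` hyperedges of `G`. -/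
noncomputable def shadowOp {V : Type*} [Fintype V] [DecidableEq V] {r : ℕ} (t : ℕ)
    (G : HyperGraph V r) : HyperGraph V (r - 1) :=
  ⟨Finset.univ.filter (fun A : Finset V =>
      A.card = r - 1 ∧ t ≤ (G.edges.filter (fun e => A ⊆ e)).card),
    fun A hA => ((Finset.mem_filter.mp hA).2).1⟩

/-- Iterated shadow operator: `iterShadow t G j = (Δ*(t))^j G`, a `(r-j)`-graph. -/
noncomputable def iterShadow {V : Type*} [Fintype V] [DecidableEq V] (t : ℕ) {r : ℕ}
    (G : HyperGraph V r) : (j : ℕ) → HyperGraph V (r - j)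
  | 0 => G
  | j + 1 => shadowOp t (iterShadow t G j)

/-- A vertex set `A` is `t`-fat with respect to `G`: there are at least `t` hyperedges
of `G` whose pairwise intersections all equal `A`. -/
def TFat {V : Type*} [DecidableEq V] {r : ℕ} (t : ℕ) (G : HyperGraph V r)
    (A : Finset V) : Prop :=
  ∃ E : Finset (Finset V), E ⊆ G.edges ∧ t ≤ E.card ∧
    ∀ e ∈ E, ∀ e' ∈ E, e ≠ e' → e ∩ e' = A

/-- The graph `G(𝒢)` of `t`-fat pairs of the `r`-graph `G`. -/
def fatGraph {V : Type*} [DecidableEq V] {r : ℕ} (t : ℕ) (G : HyperGraph V r) :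
    SimpleGraph V :=
  SimpleGraph.fromRel (fun x y => TFat t G {x, y})

/-- The `i`-graph whose hyperedges are the `t`-fat `i`-element vertex sets of `G`. -/
noncomputable def fatHyper {V : Type*} [Fintype V] [DecidableEq V] {r : ℕ} (t i : ℕ)
    (G : HyperGraph V r) : HyperGraph V i :=
  ⟨Finset.univ.filter (fun A : Finset V => A.card = i ∧ TFat t G A),
    fun A hA => ((Finset.mem_filter.mp hA).2).1⟩

/-- The `r`-graph whose hyperedges are the vertex sets of the `r`-cliques of `G`. -/
noncomputable def cliqueHyper {V : Type*} [Fintype V] (G : SimpleGraph V) (r : ℕ) :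
    HyperGraph V r :=
  ⟨Finset.univ.filter (fun e : Finset V => G.IsNClique r e),
    fun e he => ((Finset.mem_filter.mp he).2).card_eq⟩

/-- The `r`-graph on `n` vertices whose hyperedges are all `r`-sets containing the
fixed vertex `0`. -/
noncomputable def starHyper (n r : ℕ) : HyperGraph (Fin n) r :=
  ⟨Finset.univ.filter (fun e : Finset (Fin n) => e.card = r ∧ ∃ a ∈ e, a.val = 0),
    fun e he => ((Finset.mem_filter.mp he).2).1⟩

/-- `σ(F)`: the minimum size of a color class over all proper `(k+1)`-colorings of `F`. -/
noncomputable def sigmaF {α : Type*} (F : SimpleGraph α) (k : ℕ) : ℕ :=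
  sInf {m | ∃ c : α → Fin (k + 1), (∀ a b, F.Adj a b → c a ≠ c b) ∧
    ∃ i, m = Nat.card {a // c a = i}}

/-- The number of neighbors of `v` (in the graph `G`) lying in the part `i` of the
partition `P`. -/
noncomputable def nbrCount {n k : ℕ} (G : SimpleGraph (Fin n)) (P : Fin n → Fin k)
    (v : Fin n) (i : Fin k) : ℕ :=
  (Finset.univ.filter (fun w => G.Adj v w ∧ P w = i)).card

/-- The size of the part `i` of the partition `P`. -/
noncomputable def partSize {n k : ℕ} (P : Fin n → Fin k) (i : Fin k) : ℕ :=
  (Finset.univ.filter (fun v => P v = i)).card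

/-- Every copy (in the graph `G`) of a member of the decomposition family `D(F)` that lies
inside a single part of the partition `P` has at least two vertices in `B`. -/
def DecompInB {α : Type*} {n k : ℕ} (F : SimpleGraph α) (G : SimpleGraph (Fin n))
    (P : Fin n → Fin k) (B : Finset (Fin n)) : Prop :=
  ∀ c : α → Fin (k + 1), (∀ a b, F.Adj a b → c a ≠ c b) →
    ∀ i j : Fin (k + 1), i ≠ j →
      ∀ ψ : {a : α // c a = i ∨ c a = j} ↪ Fin n,
        (∀ a b : {a : α // c a = i ∨ c a = j}, F.Adj a.1 b.1 → G.Adj (ψ a) (ψ b)) →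
        (∀ a b : {a : α // c a = i ∨ c a = j}, P (ψ a) = P (ψ b)) →
        ∃ a b : {a : α // c a = i ∨ c a = j}, a ≠ b ∧ ψ a ∈ B ∧ ψ b ∈ B

/-!
The lower bound holds because the `r`-cliques of an `F`-free graph form an `F^{(r)+}`-free
`r`-graph. For the upper bound with `r ≥ 3`, call a pair `xy` fat if some `t` hyperedges pairwise
meet exactly in `{x, y}`. With `t > |V(F)| + (r - 2)|E(F)| + 1` the graph of fat pairs is
`F`-free, since a copy of `F` in it extends greedily, edge by edge, to a copy of `F^{(r)+}`.
Hyperedges whose pairs are all fat are `r`-cliques of that graph. A hyperedge through a non-fat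
pair `xy` meets a maximal family of hyperedges pairwise meeting in `{x, y}` (which has fewer
than `t` members) in a third vertex, so there are `O(n^{r-3})` of them per pair. For `r = 2`
the `2`-graph is itself an `F`-free graph.
-/

lemma Finset.exists_maximal_pairwise_inter_eq {V : Type*} [DecidableEq V]
    (D : Finset (Finset V)) (A : Finset V) :
    ∃ M ⊆ D, (M : Set (Finset V)).Pairwise (fun e e' => e ∩ e' = A) ∧
      ∀ e ∈ D, e ∉ M → ∃ e' ∈ M, e ∩ e' ≠ A := by
  set P := D.powerset.filter fun M : Finset (Finset V) =>
    (M : Set (Finset V)).Pairwise (fun e e' => e ∩ e' = A)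
  obtain ⟨M, hM, hmax⟩ := exists_max_image P card ⟨∅, by simp [P]⟩
  rw [mem_filter, mem_powerset] at hM
  refine ⟨M, hM.1, hM.2, fun e he heM => ?_⟩
  by_contra! hA
  have hins : insert e M ∈ P := by
    rw [mem_filter, mem_powerset, coe_insert, Set.pairwise_insert]
    exact ⟨insert_subset he hM.1, hM.2, fun e' he' _ => ⟨hA e' he', inter_comm e' e ▸ hA e' he'⟩⟩
  have := hmax _ hins
  rw [card_insert_of_notMem heM] at this
  omega

lemma TFat.exists_edge_sdiff_disjoint {V : Type*} [DecidableEq V] {r t : ℕ} {G : HyperGraph V r}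
    {A W : Finset V} (hA : TFat t G A) (ht : 2 ≤ t)
    (hW : #W < t) : ∃ e ∈ G.edges, A ⊆ e ∧ Disjoint (e \ A) W := by
  obtain ⟨E, hEG, hEt, hE⟩ := hA
  have hAe : ∀ e ∈ E, A ⊆ e := fun e he => by
    obtain ⟨e', he', hne⟩ := exists_mem_ne (by omega : 1 < #E) e
    rw [← hE e' he' e he hne]
    exact inter_subset_right
  by_contra! hmeet
  have hdisj : (E : Set (Finset V)).PairwiseDisjoint (fun e => (e \ A) ∩ W) :=
    fun e he e' he' hne => disjoint_left.mpr fun x hx hx' => by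
      simp only [mem_inter, mem_sdiff] at hx hx'
      exact hx.1.2 (hE e he e' he' hne ▸ mem_inter.mpr ⟨hx.1.1, hx'.1.1⟩)
  have hnonempty : ∀ e ∈ E, ((e \ A) ∩ W).Nonempty := fun e he =>
    not_disjoint_iff_nonempty_inter.mp (hmeet e (hEG he) (hAe e he))
  have := (card_le_card_biUnion hdisj hnonempty).trans
    (card_le_card (biUnion_subset.mpr fun e _ => inter_subset_right))
  omega

section Cliques

variable {V : Type*} [Fintype V]

lemma card_le_cliqueCount (H : SimpleGraph V) {r : ℕ} (s : Finset (Finset V))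
    (hs : ∀ e ∈ s, H.IsNClique r e) : #s ≤ cliqueCount H r := by
  rw [cliqueCount, Nat.card_eq_fintype_card, Fintype.card_subtype]
  exact card_le_card fun e he => mem_filter.mpr ⟨mem_univ e, hs e he⟩

lemma card_edges_cliqueHyper (H : SimpleGraph V) (r : ℕ) :
    #(cliqueHyper H r).edges = cliqueCount H r := by
  rw [cliqueCount, Nat.card_eq_fintype_card, Fintype.card_subtype]
  rfl

lemma not_containsExpansion_cliqueHyper [DecidableEq V] {α : Type*} {F : SimpleGraph α}
    {H : SimpleGraph V} (hH : ¬ GraphContains F H) (r : ℕ) :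
    ¬ (cliqueHyper H r).ContainsExpansion F := by
  rintro ⟨φ, S, -, -, -, hedge⟩
  refine hH ⟨φ, fun a b hab => ?_⟩
  have hclique := hedge a b hab
  simp only [cliqueHyper, mem_filter, mem_univ, true_and] at hclique
  exact hclique.isClique (by simp) (by simp) (φ.injective.ne hab.ne)

end Cliques

namespace HyperGraph

variable {V α : Type*} [DecidableEq V] {F : SimpleGraph α}

section TwoGraph

variable (G : HyperGraph V 2)

def toGraph : SimpleGraph V :=
  SimpleGraph.fromRel fun x y => {x, y} ∈ G.edges

lemma isNClique_toGraph {e : Finset V} (he : e ∈ G.edges) : G.toGraph.IsNClique 2 e := by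
  obtain ⟨x, y, hxy, rfl⟩ := card_eq_two.mp (G.uniform e he)
  refine ⟨?_, card_pair hxy⟩
  rw [coe_pair, SimpleGraph.isClique_pair]
  exact fun _ => (SimpleGraph.fromRel_adj _ _ _).mpr ⟨hxy, Or.inl he⟩

lemma not_graphContains_toGraph (hG : ¬ G.ContainsExpansion F) :
    ¬ GraphContains F G.toGraph := by
  rintro ⟨f, hf⟩
  refine hG ⟨f, fun _ => ∅, by simp, by simp, by simp, fun a b hab => ?_⟩
  obtain ⟨-, h | h⟩ := (SimpleGraph.fromRel_adj _ _ _).mp (hf a b hab)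
  · simpa using h
  · simpa [pair_comm] using h

end TwoGraph

variable {r t : ℕ} (G : HyperGraph V r)

lemma card_edges_le_cliqueCount_add [Fintype V] (H : SimpleGraph V) :
    #G.edges ≤
      cliqueCount H r + #(G.edges.filter fun e : Finset V => ¬ H.IsClique (e : Set V)) := by
  rw [← card_filter_add_card_filter_not (fun e : Finset V => H.IsClique (e : Set V))]
  refine Nat.add_le_add_right (card_le_cliqueCount H _ fun e he => ?_) _
  rw [mem_filter] at he
  exact ⟨he.2, G.uniform e he.1⟩

lemma card_filter_superset_le [Fintype V] (B : Finset V) :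
    #{e ∈ G.edges | B ⊆ e} ≤ Fintype.card V ^ (r - #B) := by
  calc #{e ∈ G.edges | B ⊆ e} ≤ #(powersetCard (r - #B) (univ : Finset V)) := by
        refine card_le_card_of_injOn (· \ B) (fun e he => ?_) (fun e he e' he' h => ?_)
        · rw [mem_coe, mem_filter] at he
          simp [card_sdiff_of_subset he.2, G.uniform e he.1]
        · rw [mem_coe, mem_filter] at he he'
          rw [← sdiff_union_of_subset he.2, ← sdiff_union_of_subset he'.2]
          exact congrArg (· ∪ B) h
    _ ≤ Fintype.card V ^ (r - #B) := by
        rw [card_powersetCard, card_univ]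
        exact Nat.choose_le_pow _ _

lemma fatGraph_adj {x y : V} : (fatGraph t G).Adj x y ↔ x ≠ y ∧ TFat t G {x, y} := by
  rw [fatGraph, SimpleGraph.fromRel_adj, pair_comm y x, or_self]

section GreedyEmbedding

variable [Fintype α]

def IsPartialExpansion (f : α ↪ V) (E : Finset (Sym2 α)) (S : Sym2 α → Finset V) : Prop :=
  (∀ e ∈ E, #(S e) = r - 2 ∧ Disjoint (S e) (univ.map f)) ∧
  (E : Set (Sym2 α)).PairwiseDisjoint S ∧
  ∀ a b, s(a, b) ∈ E → insert (f a) (insert (f b) (S s(a, b))) ∈ G.edges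

lemma isPartialExpansion_empty (f : α ↪ V) : G.IsPartialExpansion f ∅ fun _ => ∅ := by
  simp [IsPartialExpansion]

lemma IsPartialExpansion.exists_insert {f : α ↪ V} {E : Finset (Sym2 α)}
    {S : Sym2 α → Finset V} (hS : G.IsPartialExpansion f E S) {a b : α} (hab : a ≠ b)
    (hE : s(a, b) ∉ E) (hfat : TFat t G {f a, f b})
    (ht : Fintype.card α + (r - 2) * #E + 2 ≤ t) :
    ∃ S', G.IsPartialExpansion f (insert s(a, b) E) S' := by
  obtain ⟨hcard, hdisj, hedge⟩ := hS
  set W := univ.map f ∪ E.biUnion S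
  have hW : #W ≤ Fintype.card α + (r - 2) * #E := by
    refine (card_union_le _ _).trans (Nat.add_le_add (by simp) ?_)
    rw [mul_comm]
    exact card_biUnion_le_card_mul _ _ _ fun e he => (hcard e he).1.le
  obtain ⟨ed, hed, hsub, hedW⟩ := hfat.exists_edge_sdiff_disjoint (W := W) (by omega) (by omega)
  have hne : ∀ e ∈ E, e ≠ s(a, b) := fun e he h => hE (h ▸ he)
  have hnew : ∀ e ∈ E, Disjoint (ed \ {f a, f b}) (S e) := fun e he =>
    hedW.mono_right (subset_union_right.trans' (subset_biUnion_of_mem S he))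
  have hinsert : insert (f a) (insert (f b) (ed \ {f a, f b})) = ed := by
    rw [← insert_eq_of_mem (hsub (mem_insert_self _ _)), ← insert_eq_of_mem
      (hsub (mem_insert_of_mem (mem_singleton_self _)))]
    ext x
    simp only [mem_insert, mem_sdiff, mem_singleton]
    tauto
  refine ⟨Function.update S s(a, b) (ed \ {f a, f b}), ?_, ?_, ?_⟩
  · intro e he
    rcases mem_insert.mp he with rfl | he
    · rw [Function.update_self, card_sdiff_of_subset hsub, G.uniform ed hed,
        card_pair (f.injective.ne hab)]
      exact ⟨rfl, hedW.mono_right subset_union_left⟩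
    · rw [Function.update_of_ne (hne e he)]
      exact hcard e he
  · rw [coe_insert]
    refine Set.PairwiseDisjoint.insert (fun e he e' he' hee' => ?_) fun e he _ => ?_
    · rw [Function.onFun, Function.update_of_ne (hne e he), Function.update_of_ne (hne e' he')]
      exact hdisj he he' hee'
    · rw [Function.update_self, Function.update_of_ne (hne e he)]
      exact hnew e he
  · intro a' b' h
    rcases mem_insert.mp h with h | h
    · rw [h, Function.update_self]
      rcases Sym2.eq_iff.mp h with ⟨rfl, rfl⟩ | ⟨rfl, rfl⟩
      · rwa [hinsert]
      · rwa [insert_comm, hinsert]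
    · rw [Function.update_of_ne (hne _ h)]
      exact hedge a' b' h

lemma exists_isPartialExpansion {f : α ↪ V}
    (hf : ∀ a b, F.Adj a b → (fatGraph t G).Adj (f a) (f b))
    (ht : Fintype.card α + (r - 2) * Fintype.card (Sym2 α) + 2 ≤ t) :
    ∀ E ⊆ F.edgeFinset, ∃ S, G.IsPartialExpansion f E S := by
  intro E
  induction E using Finset.induction_on with
  | empty => exact fun _ => ⟨_, G.isPartialExpansion_empty f⟩
  | @insert e E he ih =>
    intro hsub
    obtain ⟨S, hS⟩ := ih ((subset_insert e E).trans hsub)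
    induction e using Sym2.ind with
    | _ a b =>
      have hab : F.Adj a b := SimpleGraph.mem_edgeFinset.mp (hsub (mem_insert_self _ _))
      refine hS.exists_insert G hab.ne he ((G.fatGraph_adj).mp (hf a b hab)).2 ?_
      have hE := Nat.mul_le_mul_left (r - 2) (card_le_univ E)
      omega

lemma not_graphContains_fatGraph (hG : ¬ G.ContainsExpansion F)
    (ht : Fintype.card α + (r - 2) * Fintype.card (Sym2 α) + 2 ≤ t) :
    ¬ GraphContains F (fatGraph t G) := by
  rintro ⟨f, hf⟩
  obtain ⟨S, hcard, hdisj, hedge⟩ := G.exists_isPartialExpansion hf ht _ subset_rfl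
  have hmem : ∀ {a b}, F.Adj a b → s(a, b) ∈ F.edgeFinset := fun h =>
    SimpleGraph.mem_edgeFinset.mpr h
  refine hG ⟨f, S, fun a b hab => (hcard _ (hmem hab)).1, fun a b hab x hx hxf => ?_,
    ?_, fun a b hab => hedge a b (hmem hab)⟩
  · obtain ⟨c, rfl⟩ := hxf
    exact disjoint_left.mp (hcard _ (hmem hab)).2 hx (mem_map_of_mem f (mem_univ c))
  · rw [← SimpleGraph.coe_edgeFinset]
    exact fun e he e' he' hne => hdisj he he' hne

end GreedyEmbedding

variable [Fintype V]

lemma card_filter_pair_subset_le_of_not_tFat (hr : 3 ≤ r) {x y : V} (hxy : x ≠ y)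
    (hnf : ¬ TFat t G {x, y}) :
    #{e ∈ G.edges | {x, y} ⊆ e} ≤ t * r * Fintype.card V ^ (r - 3) := by
  set D := {e ∈ G.edges | {x, y} ⊆ e}
  obtain ⟨M, hMD, hM, hmax⟩ := exists_maximal_pairwise_inter_eq D {x, y}
  have hMt : #M < t := by
    by_contra! h
    exact hnf ⟨M, hMD.trans (filter_subset _ _), h, hM⟩
  set T := M.biUnion id \ {x, y}
  have hT : #T ≤ t * r := by
    refine (card_le_card sdiff_subset).trans ((card_biUnion_le_card_mul _ _ r fun e he =>
      (G.uniform e (mem_filter.mp (hMD he)).1).le).trans ?_)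
    exact Nat.mul_le_mul_right r hMt.le
  -- By maximality of `M`; a member of `M` is its own witness since `r ≥ 3`.
  have hthird : ∀ e ∈ D, ∃ w ∈ T, {x, y, w} ⊆ e := by
    intro e he
    obtain ⟨heG, hxye⟩ := mem_filter.mp he
    obtain ⟨e', he'M, hnot⟩ : ∃ e' ∈ M, ¬ e ∩ e' ⊆ {x, y} := by
      by_cases heM : e ∈ M
      · refine ⟨e, heM, fun h => ?_⟩
        have := card_le_card ((inter_self e).symm.subset.trans h)
        rw [G.uniform e heG, card_pair hxy] at this
        omega
      · obtain ⟨e', he'M, hne⟩ := hmax e he heM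
        have hxye' := (mem_filter.mp (hMD he'M)).2
        exact ⟨e', he'M, fun h => hne (h.antisymm (subset_inter hxye hxye'))⟩
    obtain ⟨w, hw, hwxy⟩ := not_subset.mp hnot
    refine ⟨w, mem_sdiff.mpr ⟨mem_biUnion.mpr ⟨e', he'M, (mem_inter.mp hw).2⟩, hwxy⟩, ?_⟩
    simp only [insert_subset_iff, singleton_subset_iff]
    exact ⟨hxye (by simp), hxye (by simp), (mem_inter.mp hw).1⟩
  have hcover : D ⊆ T.biUnion fun w => {e ∈ G.edges | {x, y, w} ⊆ e} := fun e he => by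
    obtain ⟨w, hw, hsub⟩ := hthird e he
    exact mem_biUnion.mpr ⟨w, hw, mem_filter.mpr ⟨(mem_filter.mp he).1, hsub⟩⟩
  have htriple : ∀ w ∈ T, #{e ∈ G.edges | {x, y, w} ⊆ e} ≤ Fintype.card V ^ (r - 3) :=
    fun w hw => by
      obtain ⟨-, hwxy⟩ := mem_sdiff.mp hw
      have hcard : #{x, y, w} = 3 := by
        rw [card_insert_of_notMem (by simp only [mem_insert, mem_singleton] at hwxy ⊢; tauto),
          card_pair fun h : y = w => hwxy (h ▸ by simp)]
      simpa [hcard] using G.card_filter_superset_le {x, y, w}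
  calc #D ≤ #T * Fintype.card V ^ (r - 3) :=
        (card_le_card hcover).trans (card_biUnion_le_card_mul _ _ _ htriple)
    _ ≤ t * r * Fintype.card V ^ (r - 3) := Nat.mul_le_mul_right _ hT

lemma card_filter_not_isClique_fatGraph_le (hr : 3 ≤ r) :
    #(G.edges.filter fun e : Finset V => ¬ (fatGraph t G).IsClique (e : Set V)) ≤
      t * r * Fintype.card V ^ (r - 1) := by
  set P := (univ : Finset (V × V)).filter fun p => p.1 ≠ p.2 ∧ ¬ TFat t G {p.1, p.2}
  have hcover : G.edges.filter (fun e : Finset V => ¬ (fatGraph t G).IsClique (e : Set V)) ⊆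
      P.biUnion fun p : V × V => G.edges.filter fun e : Finset V => {p.1, p.2} ⊆ e := by
    intro e he
    obtain ⟨heG, hnc⟩ := mem_filter.mp he
    obtain ⟨x, hx, y, hy, hxy, hadj⟩ : ∃ x ∈ e, ∃ y ∈ e, x ≠ y ∧ ¬ (fatGraph t G).Adj x y := by
      simpa [SimpleGraph.isClique_iff, Set.Pairwise] using hnc
    refine mem_biUnion.mpr ⟨(x, y), mem_filter.mpr ⟨mem_univ _, hxy, fun h => hadj ?_⟩,
      mem_filter.mpr ⟨heG, insert_subset hx (singleton_subset_iff.mpr hy)⟩⟩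
    exact (G.fatGraph_adj).mpr ⟨hxy, h⟩
  have hP : #P ≤ Fintype.card V ^ 2 := by
    simpa [sq] using card_le_univ P
  calc _ ≤ #P * (t * r * Fintype.card V ^ (r - 3)) :=
        (card_le_card hcover).trans (card_biUnion_le_card_mul _ _ _ fun p hp =>
          G.card_filter_pair_subset_le_of_not_tFat hr (mem_filter.mp hp).2.1
            (mem_filter.mp hp).2.2)
    _ ≤ Fintype.card V ^ 2 * (t * r * Fintype.card V ^ (r - 3)) := Nat.mul_le_mul_right _ hP
    _ = t * r * Fintype.card V ^ (r - 1) := by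
        rw [show r - 1 = 2 + (r - 3) by omega, pow_add]
        ring

end HyperGraph

section Extremal

variable {α : Type*} {F : SimpleGraph α} {n r : ℕ}

lemma cliqueCount_le_exClique {H : SimpleGraph (Fin n)} (hH : ¬ GraphContains F H) :
    cliqueCount H r ≤ exClique n r F := by
  refine le_csSup ⟨Fintype.card (Finset (Fin n)), ?_⟩ ⟨H, hH, rfl⟩
  rintro m ⟨H', -, rfl⟩
  rw [cliqueCount, Nat.card_eq_fintype_card]
  exact Fintype.card_subtype_le _

lemma exExpansion_le {b : ℕ}
    (h : ∀ G : HyperGraph (Fin n) r, ¬ G.ContainsExpansion F → #G.edges ≤ b) :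
    exExpansion r n F ≤ b :=
  csSup_le' fun _ ⟨G, hG, hm⟩ => hm ▸ h G hG

lemma exClique_le_exExpansion : exClique n r F ≤ exExpansion r n F := by
  refine csSup_le' fun _ ⟨H, hH, hm⟩ => hm ▸ le_csSup ⟨Fintype.card (Finset (Fin n)), ?_⟩
    ⟨cliqueHyper H r, not_containsExpansion_cliqueHyper hH r, card_edges_cliqueHyper H r⟩
  rintro m ⟨G, -, rfl⟩
  exact card_le_univ _

end Extremal

theorem statement_0_general {α : Type*} [Fintype α] (F : SimpleGraph α) (r : ℕ)
    (hr : 2 ≤ r) :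
    ∃ C : ℕ, ∀ n : ℕ,
      exClique n r F ≤ exExpansion r n F ∧
      exExpansion r n F ≤ exClique n r F + C * n ^ (r - 1) := by
  set t := Fintype.card α + (r - 2) * Fintype.card (Sym2 α) + 2
  refine ⟨t * r, fun n => ⟨exClique_le_exExpansion, exExpansion_le fun G hG => ?_⟩⟩
  obtain rfl | hr3 : r = 2 ∨ 3 ≤ r := by omega
  · calc #G.edges ≤ cliqueCount G.toGraph 2 :=
          card_le_cliqueCount _ _ fun e he => G.isNClique_toGraph he
      _ ≤ exClique n 2 F := cliqueCount_le_exClique (G.not_graphContains_toGraph hG)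
      _ ≤ _ := Nat.le_add_right _ _
  · calc #G.edges ≤ cliqueCount (fatGraph t G) r +
          #(G.edges.filter fun e : Finset (Fin n) =>
            ¬ (fatGraph t G).IsClique (e : Set (Fin n))) :=
          G.card_edges_le_cliqueCount_add _
      _ ≤ exClique n r F + t * r * n ^ (r - 1) := by
          gcongr
          · exact cliqueCount_le_exClique (G.not_graphContains_fatGraph hG le_rfl)
          · simpa using G.card_filter_not_isClique_fatGraph_le hr3

/-- If `χ(F) = k+1 > r ≥ 2`, then
`ex(n, K_r, F) ≤ ex_r(n, F^{(r)+}) ≤ ex(n, K_r, F) + C n^{r-1}` for a constant `C = C(F,r)`. -/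
theorem statement_0 {α : Type*} [Fintype α] (F : SimpleGraph α) (k r : ℕ)
    (hr : 2 ≤ r) (hkr : r < k + 1)
    (hchi : F.chromaticNumber = (k : ℕ∞) + 1) :
    ∃ C : ℕ, ∀ n : ℕ,
      exClique n r F ≤ exExpansion r n F ∧
      exExpansion r n F ≤ exClique n r F + C * n ^ (r - 1) :=
  statement_0_general F r hr
end

section
/- Let r ≥ 3, let F be a graph, let H be an F^{(r)+}-free r-graph, and let t ≥ (r−2)|E(F)| + |V(F)|. Then the (r−1)-graph Δ*(t)H is F^{(r−1)+}-free. -/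
open Finset
open scoped Classical

/-! Every edge of a copy of `F^{(r-1)+}` in `Δ*(t)H` is a `t`-heavy `(r-1)`-set, so at least `t`
distinct vertices extend it to an edge of `H`. The copy occupies at most
`|V(F)| + (r-3)|E(F)|` vertices, hence every edge keeps at least `|E(F)|` extending vertices
outside the copy, and Hall's theorem chooses distinct ones, one per edge: adding them turns the
copy into a copy of `F^{(r)+}` in `H`. -/

theorem Finset.exists_injective_mem_sdiff {ι α : Type*} [Fintype ι] [DecidableEq α]
    (C : ι → Finset α) (B : Finset α) (hC : ∀ i, #B + Fintype.card ι ≤ #(C i)) :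
    ∃ f : ι → α, Function.Injective f ∧ ∀ i, f i ∈ C i \ B := by
  refine (all_card_le_biUnion_card_iff_exists_injective fun i => C i \ B).1 fun s => ?_
  obtain rfl | ⟨i, hi⟩ := s.eq_empty_or_nonempty
  · simp
  calc #s ≤ Fintype.card ι := card_le_univ s
    _ ≤ #(C i) - #B := by have := hC i; omega
    _ ≤ #(C i \ B) := le_card_sdiff B (C i)
    _ ≤ #(s.biUnion fun i => C i \ B) :=
      card_le_card (subset_biUnion_of_mem (fun i => C i \ B) hi)

namespace HyperGraph

section Witness

variable {V α : Type*} [DecidableEq V] {r : ℕ}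

noncomputable def expansionEdge (φ : α ↪ V) (S : Sym2 α → Finset V) (q : Sym2 α) :
    Finset V :=
  q.toFinset.image φ ∪ S q

theorem expansionEdge_mk (φ : α ↪ V) (S : Sym2 α → Finset V) (a b : α) :
    expansionEdge φ S s(a, b) = insert (φ a) (insert (φ b) (S s(a, b))) := by
  simp [expansionEdge, Sym2.toFinset_mk_eq, insert_union]

noncomputable def expansionVertices [Fintype α] (F : SimpleGraph α) (φ : α ↪ V)
    (S : Sym2 α → Finset V) : Finset V :=
  univ.image φ ∪ F.edgeFinset.biUnion S

theorem IsExpansionWitness.card_expansionVertices_le [Fintype α] {F : SimpleGraph α}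
    {G : HyperGraph V r} {φ : α ↪ V} {S : Sym2 α → Finset V}
    (hw : G.IsExpansionWitness F φ S) :
    #(expansionVertices F φ S) ≤ Fintype.card α + (r - 2) * #F.edgeFinset := by
  have hS_sum : ∑ q ∈ F.edgeFinset, #(S q) = (r - 2) * #F.edgeFinset := by
    rw [sum_const_nat fun q hq => ?_, mul_comm]
    induction q using Sym2.ind with | _ a b => exact hw.1 a b (SimpleGraph.mem_edgeFinset.1 hq)
  calc #(expansionVertices F φ S) ≤ #(univ.image φ) + #(F.edgeFinset.biUnion S) :=
        card_union_le _ _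
    _ ≤ Fintype.card α + ∑ q ∈ F.edgeFinset, #(S q) :=
      add_le_add card_image_le card_biUnion_le
    _ = _ := by rw [hS_sum]

theorem IsExpansionWitness.extend [Fintype α] {F : SimpleGraph α} {K : HyperGraph V (r - 1)}
    {G : HyperGraph V r} (hr : 3 ≤ r) {φ : α ↪ V} {S : Sym2 α → Finset V}
    (hw : K.IsExpansionWitness F φ S) (f : F.edgeSet → V) (hf_inj : Function.Injective f)
    (hf_new : ∀ q, f q ∉ expansionVertices F φ S)
    (hf_edge : ∀ q : F.edgeSet, insert (f q) (expansionEdge φ S q) ∈ G.edges) :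
    G.IsExpansionWitness F φ
      fun q => if hq : q ∈ F.edgeSet then insert (f ⟨q, hq⟩) (S q) else ∅ := by
  obtain ⟨hS_card, hS_core, hS_disj, -⟩ := hw
  have hf_core : ∀ q a, f q ≠ φ a := fun q a hqa =>
    hf_new q (mem_union_left _ (hqa ▸ mem_image_of_mem φ (mem_univ a)))
  have hf_S : ∀ q, ∀ q' ∈ F.edgeSet, f q ∉ S q' := fun q q' hq' hqq' =>
    hf_new q (mem_union_right _ (mem_biUnion.2 ⟨q', by simpa using hq', hqq'⟩))
  set S' : Sym2 α → Finset V :=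
    fun q => if hq : q ∈ F.edgeSet then insert (f ⟨q, hq⟩) (S q) else ∅
  have hS' : ∀ q (hq : q ∈ F.edgeSet), S' q = insert (f ⟨q, hq⟩) (S q) :=
    fun q hq => dif_pos hq
  refine ⟨fun a b hab => ?_, fun a b hab x hx => ?_, fun e he e' he' hee' => ?_,
    fun a b hab => ?_⟩
  · rw [hS' s(a, b) hab, card_insert_of_notMem (hf_S _ s(a, b) hab), hS_card a b hab]
    omega
  · rcases mem_insert.1 (hS' s(a, b) hab ▸ hx) with rfl | hx
    · rintro ⟨c, hc⟩
      exact hf_core _ c hc.symm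
    · exact hS_core a b hab x hx
  · have hfe : f ⟨e, he⟩ ≠ f ⟨e', he'⟩ := hf_inj.ne (by simpa using hee')
    rw [hS' e he, hS' e' he', disjoint_insert_left, disjoint_insert_right, mem_insert]
    exact ⟨by simpa [hfe] using hf_S _ e' he', hf_S _ e he, hS_disj e he e' he' hee'⟩
  · rw [hS' s(a, b) hab, insert_comm (φ b), insert_comm (φ a), ← expansionEdge_mk]
    exact hf_edge ⟨_, hab⟩

end Witness

variable {V α : Type*} [Fintype V] [DecidableEq V] {r : ℕ}

def extensions (G : HyperGraph V r) (A : Finset V) : Finset V :=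
  {v | v ∉ A ∧ insert v A ∈ G.edges}

@[simp]
theorem mem_extensions {G : HyperGraph V r} {A : Finset V} {v : V} :
    v ∈ G.extensions A ↔ v ∉ A ∧ insert v A ∈ G.edges := by
  simp [extensions]

theorem card_extensions (G : HyperGraph V r) {A : Finset V} (hA : #A + 1 = r) :
    #(G.extensions A) = #{e ∈ G.edges | A ⊆ e} := by
  refine card_nbij (fun v => insert v A) (fun v hv => ?_) (fun v hv w hw hvw => ?_) ?_
  · simp [(mem_extensions.1 hv).2, subset_insert]
  · have hvw : v ∈ insert w A := by
      rw [← show insert v A = insert w A from hvw]; exact mem_insert_self v A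
    simpa [(mem_extensions.1 hv).1] using hvw
  · intro e he
    rw [coe_filter, Set.mem_ofPred_eq] at he
    obtain ⟨v, hve, hvA⟩ := exists_of_ssubset (ssubset_of_subset_of_ne he.2 fun h => by
      have := G.uniform e he.1; subst h; omega)
    have hvAe : insert v A = e := eq_of_subset_of_card_le (insert_subset hve he.2) (by
      rw [card_insert_of_notMem hvA, G.uniform e he.1, hA])
    exact ⟨v, by simp [hvA, hvAe, he.1], hvAe⟩

theorem le_card_extensions_of_mem_shadowOp {t : ℕ} {G : HyperGraph V r} (hr : 1 ≤ r)
    {A : Finset V} (hA : A ∈ (shadowOp t G).edges) : t ≤ #(G.extensions A) := by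
  simp only [shadowOp, mem_filter, mem_univ, true_and] at hA
  rw [card_extensions G (by omega)]
  exact hA.2

theorem ContainsExpansion.of_shadowOp [Fintype α] {F : SimpleGraph α} {t : ℕ} (hr : 3 ≤ r)
    (ht : (r - 2) * Nat.card F.edgeSet + Fintype.card α ≤ t) {G : HyperGraph V r}
    (h : (shadowOp t G).ContainsExpansion F) : G.ContainsExpansion F := by
  obtain ⟨φ, S, hw⟩ := h
  have hroom : #(expansionVertices F φ S) + Fintype.card F.edgeSet ≤ t := by
    have hcard := hw.card_expansionVertices_le
    rw [Nat.card_eq_fintype_card, ← SimpleGraph.edgeFinset_card] at ht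
    rw [← SimpleGraph.edgeFinset_card]
    have hmul : (r - 1 - 2) * #F.edgeFinset + #F.edgeFinset = (r - 2) * #F.edgeFinset := by
      rw [← Nat.succ_mul]; congr 1; omega
    omega
  have hextend : ∀ q : F.edgeSet, #(expansionVertices F φ S) + Fintype.card F.edgeSet ≤
      #(G.extensions (expansionEdge φ S q)) := by
    rintro ⟨q, hq⟩
    induction q using Sym2.ind with | _ a b => ?_
    refine hroom.trans (le_card_extensions_of_mem_shadowOp (by omega) ?_)
    rw [expansionEdge_mk]
    exact hw.2.2.2 a b hq
  obtain ⟨f, hf_inj, hf⟩ := exists_injective_mem_sdiff _ _ hextend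
  exact ⟨φ, _, hw.extend hr f hf_inj (fun q => (mem_sdiff.1 (hf q)).2)
    fun q => (mem_extensions.1 (mem_sdiff.1 (hf q)).1).2⟩

end HyperGraph

/-- If `r ≥ 3`, `G` is `F^{(r)+}`-free and
`t ≥ (r−2)|E(F)| + |V(F)|`, then `Δ*(t)G` is `F^{(r−1)+}`-free. -/
theorem statement_5 {α V : Type*} [Fintype α] [Fintype V] [DecidableEq V]
    (F : SimpleGraph α) (r t : ℕ) (hr : 3 ≤ r)
    (ht : (r - 2) * Nat.card F.edgeSet + Fintype.card α ≤ t)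
    (G : HyperGraph V r) (hG : ¬ G.ContainsExpansion F) :
    ¬ (shadowOp t G).ContainsExpansion F :=
  fun h => hG (h.of_shadowOp hr ht)
end

section
/- Let r ≥ 2, let F be a graph, let F_0 be a subgraph of F, and let t ≥ (r−2)|E(F)| + |V(F)|. Let G be an r-graph, and suppose there is a copy of F in the shadow graph of G with the following properties: (a) the edges of the copy corresponding to edges of F_0 form the core of a copy of F_0^{(r)+} contained in G, whose expansion vertices are disjoint from the vertex set of the copy of F; and (b) every edge of the copy of F not corresponding to an edge of F_0 is a t-fat pair with respect to G. Then G contains a copy of F^{(r)+} whose core is this copy of F. -/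
open Finset
open scoped Classical

/-! The expansion vertices are chosen greedily, one missing edge `ab` of `F` at a time. The
copy built so far has at most `|V(F)| + (r-2)|E(F)| ≤ t` vertices, and the `t` hyperedges
witnessing that `{φ a, φ b}` is `t`-fat form a sunflower with kernel `{φ a, φ b}` whose petals
are pairwise disjoint, so some petal misses the copy and serves as the expansion vertices
of `ab`. -/

theorem exists_disjoint_sdiff_of_pairwise_inter_eq {V : Type*} [DecidableEq V]
    (E : Finset (Finset V)) (A B : Finset V)
    (hE : ∀ e ∈ E, ∀ e' ∈ E, e ≠ e' → e ∩ e' = A)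
    (hcard : #(B \ A) < #E) : ∃ e ∈ E, Disjoint (e \ A) B := by
  by_contra! hmeet
  have hmeet' : ∀ e ∈ E, ∃ x ∈ e \ A, x ∈ B := fun e he =>
    not_disjoint_iff.mp (hmeet e he)
  -- lets `choose!` return a non-dependent function
  have : Nonempty V := by
    obtain ⟨e, he⟩ := card_pos.mp (show 0 < #E by omega)
    exact ⟨(hmeet' e he).choose⟩
  choose! f hfA hfB using hmeet'
  obtain ⟨e, he, e', he', hne, hfe⟩ := Finset.exists_ne_map_eq_of_card_lt_of_maps_to hcard
    (f := f) fun e he => mem_sdiff.mpr ⟨hfB e he, (mem_sdiff.mp (hfA e he)).2⟩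
  have hf : f e ∈ e ∩ e' :=
    mem_inter.mpr ⟨(mem_sdiff.mp (hfA e he)).1, hfe ▸ (mem_sdiff.mp (hfA e' he')).1⟩
  rw [hE e he e' he' hne] at hf
  exact (mem_sdiff.mp (hfA e he)).2 hf

theorem TFat.exists_mem_edges_disjoint_sdiff {V : Type*} [DecidableEq V] {r t : ℕ}
    {G : HyperGraph V r} {A : Finset V} (hA : TFat t G A) (B : Finset V) (ht : 2 ≤ t)
    (hB : #(B \ A) < t) : ∃ e ∈ G.edges, A ⊆ e ∧ Disjoint (e \ A) B := by
  obtain ⟨E, hEG, htE, hE⟩ := hA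
  obtain ⟨e, he, hdisj⟩ := exists_disjoint_sdiff_of_pairwise_inter_eq E A B hE (hB.trans_le htE)
  obtain ⟨e', he', hne⟩ := Finset.exists_mem_ne (by omega : 1 < #E) e
  exact ⟨e, hEG he, hE e he e' he' hne.symm ▸ inter_subset_left, hdisj⟩

namespace HyperGraph

variable {V α : Type*} [DecidableEq V] [Fintype α] {r : ℕ} {G : HyperGraph V r}
  {H : SimpleGraph α} {φ : α ↪ V} {S : Sym2 α → Finset V}

noncomputable def copyVerts (H : SimpleGraph α) (φ : α ↪ V) (S : Sym2 α → Finset V) :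
    Finset V :=
  univ.map φ ∪ H.edgeFinset.biUnion S

namespace IsExpansionWitness

theorem card_copyVerts_le (hw : G.IsExpansionWitness H φ S) :
    #(copyVerts H φ S) ≤ Fintype.card α + (r - 2) * #H.edgeFinset := by
  have hS : ∀ e ∈ H.edgeFinset, #(S e) ≤ r - 2 := by
    intro e he
    induction e using Sym2.ind with
    | _ a b => exact (hw.1 a b (SimpleGraph.mem_edgeFinset.mp he)).le
  calc #(copyVerts H φ S)
      ≤ #(univ.map φ) + #(H.edgeFinset.biUnion S) := card_union_le _ _
    _ ≤ Fintype.card α + #H.edgeFinset * (r - 2) := by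
        gcongr
        · simp
        · exact card_biUnion_le.trans (sum_le_card_nsmul _ _ _ hS)
    _ = Fintype.card α + (r - 2) * #H.edgeFinset := by rw [Nat.mul_comm]

theorem sup_edge (hw : G.IsExpansionWitness H φ S) {a b : α} (hab : a ≠ b)
    (hHab : ¬ H.Adj a b) {e : Finset V} (he : e ∈ G.edges) (hAe : {φ a, φ b} ⊆ e)
    (hdisj : Disjoint (e \ {φ a, φ b}) (copyVerts H φ S)) :
    G.IsExpansionWitness (H ⊔ SimpleGraph.edge a b) φ
      (Function.update S s(a, b) (e \ {φ a, φ b})) := by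
  obtain ⟨hcard, havoid, hdisjS, hedge⟩ := hw
  have hne : ∀ e' ∈ H.edgeSet, e' ≠ s(a, b) := fun e' he' h =>
    hHab (h ▸ he' : s(a, b) ∈ H.edgeSet)
  have hadj : ∀ {x y}, (H ⊔ SimpleGraph.edge a b).Adj x y → H.Adj x y ∨ s(x, y) = s(a, b) :=
    fun h => h.imp id fun h => ((SimpleGraph.adj_edge a b).mp h).1.symm
  have hcore : ∀ x, φ x ∈ copyVerts H φ S := fun x =>
    mem_union_left _ (mem_map_of_mem φ (mem_univ x))
  have hexp : ∀ e' ∈ H.edgeSet, S e' ⊆ copyVerts H φ S := fun e' he' =>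
    (subset_biUnion_of_mem S (SimpleGraph.mem_edgeFinset.mpr he')).trans subset_union_right
  have hPe : insert (φ a) (insert (φ b) (e \ {φ a, φ b})) = e := by
    calc insert (φ a) (insert (φ b) (e \ {φ a, φ b})) = e \ {φ a, φ b} ∪ {φ a, φ b} := by
          rw [union_insert, union_singleton]
      _ = e := sdiff_union_of_subset hAe
  refine ⟨fun x y h => ?_, fun x y h => ?_, fun e₁ he₁ e₂ he₂ h12 => ?_,
    fun x y h => ?_⟩
  · rcases hadj h with h | h
    · rw [Function.update_of_ne (hne _ h)]
      exact hcard x y h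
    · rw [h, Function.update_self, card_sdiff_of_subset hAe, G.uniform e he,
        card_pair (φ.injective.ne hab)]
  · rcases hadj h with h | h
    · rw [Function.update_of_ne (hne _ h)]
      exact havoid x y h
    · rw [h, Function.update_self]
      rintro z hz ⟨w, rfl⟩
      exact disjoint_left.mp hdisj hz (hcore w)
  · rw [SimpleGraph.edgeSet_sup, SimpleGraph.edgeSet_edge_of_ne hab] at he₁ he₂
    rcases he₁ with he₁ | rfl <;> rcases he₂ with he₂ | rfl
    · rw [Function.update_of_ne (hne _ he₁), Function.update_of_ne (hne _ he₂)]
      exact hdisjS e₁ he₁ e₂ he₂ h12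
    · rw [Function.update_of_ne (hne _ he₁), Function.update_self]
      exact (hdisj.mono_right (hexp e₁ he₁)).symm
    · rw [Function.update_of_ne (hne _ he₂), Function.update_self]
      exact hdisj.mono_right (hexp e₂ he₂)
    · exact absurd rfl h12
  · rcases h with h | h
    · rw [Function.update_of_ne (hne _ h)]
      exact hedge x y h
    · obtain ⟨⟨rfl, rfl⟩ | ⟨rfl, rfl⟩, -⟩ := (SimpleGraph.edge_adj a b x y).mp h
      · rwa [Function.update_self, hPe]
      · rwa [Sym2.eq_swap, Function.update_self, insert_comm, hPe]

end IsExpansionWitness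

theorem exists_isExpansionWitness_of_tFat {t : ℕ} {F F₀ : SimpleGraph α}
    (ht : (r - 2) * Nat.card F.edgeSet + Fintype.card α ≤ t)
    (hfat : ∀ a b, F.Adj a b → ¬ F₀.Adj a b → TFat t G {φ a, φ b})
    (hF₀H : F₀ ≤ H) (hHF : H ≤ F) (hw : G.IsExpansionWitness H φ S) :
    ∃ S', G.IsExpansionWitness F φ S' := by
  induction H using WellFoundedGT.induction generalizing S with
  | _ H ih =>
  by_cases hFH : F ≤ H
  · exact ⟨S, le_antisymm hHF hFH ▸ hw⟩
  obtain ⟨a, b, hFab, hHab⟩ : ∃ a b, F.Adj a b ∧ ¬ H.Adj a b := by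
    simpa [SimpleGraph.le_iff_adj] using hFH
  have hcopy : #(copyVerts H φ S) ≤ t := calc
    #(copyVerts H φ S) ≤ Fintype.card α + (r - 2) * #H.edgeFinset := hw.card_copyVerts_le
    _ ≤ Fintype.card α + (r - 2) * #F.edgeFinset := by gcongr
    _ ≤ t := by
        rwa [SimpleGraph.edgeFinset_card, ← Nat.card_eq_fintype_card (α := F.edgeSet), add_comm]
  have hAB : {φ a, φ b} ⊆ copyVerts H φ S :=
    insert_subset_iff.mpr ⟨mem_union_left _ (mem_map_of_mem φ (mem_univ a)),
      singleton_subset_iff.mpr (mem_union_left _ (mem_map_of_mem φ (mem_univ b)))⟩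
  have hsplit := card_sdiff_add_card_eq_card hAB
  rw [card_pair (φ.injective.ne hFab.ne)] at hsplit
  obtain ⟨e, he, hAe, hdisj⟩ := TFat.exists_mem_edges_disjoint_sdiff
    (hfat a b hFab fun h => hHab (hF₀H h)) (copyVerts H φ S) (by omega) (by omega)
  exact ih _ (SimpleGraph.lt_sup_edge _ _ _ hFab.ne hHab) (le_sup_of_le_left hF₀H)
    (sup_le hHF ((SimpleGraph.edge_le_iff F).mpr (Or.inr hFab)))
    (hw.sup_edge hFab.ne hHab he hAe hdisj)

end HyperGraph

theorem statement_7_general {α V : Type*} [Fintype α] [DecidableEq V]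
    (F F₀ : SimpleGraph α) (hF₀ : F₀ ≤ F) (r t : ℕ)
    (ht : (r - 2) * Nat.card F.edgeSet + Fintype.card α ≤ t)
    (G : HyperGraph V r) (φ : α ↪ V)
    (S : Sym2 α → Finset V) (hwit : G.IsExpansionWitness F₀ φ S)
    (hfat : ∀ a b, F.Adj a b → ¬ F₀.Adj a b → TFat t G {φ a, φ b}) :
    ∃ S' : Sym2 α → Finset V, G.IsExpansionWitness F φ S' :=
  HyperGraph.exists_isExpansionWitness_of_tFat ht hfat le_rfl hF₀ hwit

/-- If a copy of `F` (given by `φ`) in the shadow graph of `G` is such that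
the edges of a subgraph `F₀` form the core of a copy of `F₀^{(r)+}` in `G` whose expansion
vertices avoid the copy of `F`, and every other edge of the copy of `F` is a `t`-fat pair
with `t ≥ (r−2)|E(F)| + |V(F)|`, then `G` contains a copy of `F^{(r)+}` with this core. -/
theorem statement_7 {α V : Type*} [Fintype α] [DecidableEq V]
    (F F₀ : SimpleGraph α) (hF₀ : F₀ ≤ F) (r t : ℕ) (hr : 2 ≤ r)
    (ht : (r - 2) * Nat.card F.edgeSet + Fintype.card α ≤ t)
    (G : HyperGraph V r) (φ : α ↪ V)
    (hshadow : ∀ a b, F.Adj a b → ∃ e ∈ G.edges, φ a ∈ e ∧ φ b ∈ e)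
    (S : Sym2 α → Finset V) (hwit : G.IsExpansionWitness F₀ φ S)
    (hfat : ∀ a b, F.Adj a b → ¬ F₀.Adj a b → TFat t G {φ a, φ b}) :
    ∃ S' : Sym2 α → Finset V, G.IsExpansionWitness F φ S' :=
  statement_7_general F F₀ hF₀ r t ht G φ S hwit hfat
end

section
/- Let r ≥ 2, let F be a graph, and set t = (r−2)|E(F)| + |V(F)|. If an r-graph G is F^{(r)+}-free, then the graph G(G) on the vertex set of G, whose edges are the pairs of vertices that are t-fat with respect to G, is F-free. -/
open Finset
open scoped Classical

/-! If `f` embeds `F` into the graph of `t`-fat pairs, every edge `ab` of `F` carries a sunflower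
of at least `t` hyperedges with core `{f a, f b}`. Choose these hyperedges greedily, one edge at a
time: the vertices already used (the image of `f` and the earlier petals) number fewer than `t`,
and the petals of a sunflower are disjoint, so some petal avoids all of them. The chosen
hyperedges then form a copy of `F^{(r)+}`. -/

section Sunflower

variable {ι V : Type*} [DecidableEq V]

def IsSunflower (E : Finset (Finset V)) (A : Finset V) : Prop :=
  ∀ e ∈ E, ∀ e' ∈ E, e ≠ e' → e ∩ e' = A

theorem IsSunflower.subset {E : Finset (Finset V)} {A e : Finset V} (hE : IsSunflower E A)
    (hcard : 1 < #E) (he : e ∈ E) : A ⊆ e := by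
  obtain ⟨e', he', hne⟩ := exists_mem_ne hcard e
  rw [← hE e he e' he' hne.symm]
  exact inter_subset_left

/-- The petals `e \ A` are pairwise disjoint, so at most `#(B \ A)` of them meet `B`. -/
theorem IsSunflower.exists_disjoint_sdiff {E : Finset (Finset V)} {A B : Finset V}
    (hE : IsSunflower E A) (hB : #(B \ A) < #E) : ∃ e ∈ E, Disjoint (e \ A) B := by
  by_contra! hmeet
  simp only [not_disjoint_iff, mem_sdiff] at hmeet
  obtain ⟨e₀, he₀⟩ := card_pos.1 (hB.trans_le' (Nat.zero_le _))
  have : Nonempty V := ⟨(hmeet e₀ he₀).choose⟩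
  choose! g hgA hgB using hmeet
  refine hB.not_ge (card_le_card_of_injOn g (fun e he => ?_) fun e he e' he' hgg => ?_)
  · exact mem_sdiff.2 ⟨hgB e he, (hgA e he).2⟩
  · by_contra hne
    have : g e ∈ e ∩ e' := mem_inter.2 ⟨(hgA e he).1, hgg ▸ (hgA e' he').1⟩
    exact (hgA e he).2 (hE e he e' he' hne ▸ this)

/-- Greedy choice: when the petal for `i` is chosen, the vertices to avoid number at most
`#B₀ + k * (#T - 1) - #(A i) < #(E i)`. -/
theorem exists_pairwiseDisjoint_petals (T : Finset ι) (E : ι → Finset (Finset V))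
    (A : ι → Finset V) (B₀ : Finset V) (k : ℕ) (hA : ∀ i ∈ T, (A i).Nonempty)
    (hAB : ∀ i ∈ T, A i ⊆ B₀) (hE : ∀ i ∈ T, IsSunflower (E i) (A i))
    (hk : ∀ i ∈ T, ∀ e ∈ E i, #(e \ A i) ≤ k) (hcard : ∀ i ∈ T, #B₀ + k * #T ≤ #(E i)) :
    ∃ h : ι → Finset V, (∀ i ∈ T, h i ∈ E i ∧ Disjoint (h i \ A i) B₀) ∧
      (T : Set ι).PairwiseDisjoint fun i => h i \ A i := by
  induction T using Finset.induction_on with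
  | empty => exact ⟨fun _ => ∅, by simp, by simp⟩
  | @insert i T hiT ih =>
    obtain ⟨h, hmem, hdisj⟩ := ih (fun j hj => hA j (mem_insert_of_mem hj))
      (fun j hj => hAB j (mem_insert_of_mem hj)) (fun j hj => hE j (mem_insert_of_mem hj))
      (fun j hj => hk j (mem_insert_of_mem hj)) fun j hj =>
        le_trans (by gcongr _ + k * ?_; exact card_le_card (subset_insert i T))
          (hcard j (mem_insert_of_mem hj))
    set B := B₀ ∪ T.biUnion fun j => h j \ A j
    have hBcard : #B ≤ #B₀ + k * #T := by
      calc #B ≤ #B₀ + #(T.biUnion fun j => h j \ A j) := card_union_le _ _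
        _ ≤ #B₀ + ∑ j ∈ T, k := by
          gcongr
          exact card_biUnion_le.trans (sum_le_sum fun j hj => hk j (mem_insert_of_mem hj) _
            (hmem j hj).1)
        _ = #B₀ + k * #T := by rw [sum_const, smul_eq_mul, mul_comm]
    have hAi : A i ⊆ B := (hAB i (mem_insert_self i T)).trans subset_union_left
    obtain ⟨e, he, heB⟩ : ∃ e ∈ E i, Disjoint (e \ A i) B := by
      refine (hE i (mem_insert_self i T)).exists_disjoint_sdiff ?_
      have hEi := hcard i (mem_insert_self i T)
      have hApos := (hA i (mem_insert_self i T)).card_pos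
      have hAiB := card_le_card hAi
      rw [card_insert_of_notMem hiT, mul_add_one] at hEi
      rw [card_sdiff_of_subset hAi]
      omega
    have hupdate : ∀ j ∈ T, Function.update h i e j = h j := fun j hj =>
      Function.update_of_ne (ne_of_mem_of_not_mem hj hiT) _ _
    refine ⟨Function.update h i e, fun j hj => ?_, ?_⟩
    · rcases mem_insert.1 hj with rfl | hj
      · simpa using ⟨he, heB.mono_right subset_union_left⟩
      · rw [hupdate j hj]
        exact hmem j hj
    · rw [coe_insert, Set.pairwiseDisjoint_insert]
      refine ⟨fun j hj l hl hjl => ?_, fun j hj _ => ?_⟩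
      · simpa only [Function.onFun, hupdate j hj, hupdate l hl] using hdisj hj hl hjl
      · rw [Function.update_self, hupdate j hj]
        exact heB.mono_right
          ((subset_biUnion_of_mem (fun j => h j \ A j) hj).trans subset_union_right)

end Sunflower

theorem tFat_of_fatGraph_adj {V : Type*} [DecidableEq V] {r t : ℕ} {G : HyperGraph V r}
    {x y : V} (h : (fatGraph t G).Adj x y) : TFat t G {x, y} := by
  rw [fatGraph, SimpleGraph.fromRel_adj] at h
  exact h.2.elim id fun h' => pair_comm x y ▸ h'

namespace HyperGraph

variable {α V : Type*} [Fintype α] [DecidableEq V] {r : ℕ}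

theorem isExpansionWitness_of_petals (G : HyperGraph V r) (F : SimpleGraph α) (f : α ↪ V)
    (h : Sym2 α → Finset V) (hG : ∀ a b, F.Adj a b → h s(a, b) ∈ G.edges)
    (hsub : ∀ a b, F.Adj a b → {f a, f b} ⊆ h s(a, b))
    (hcore : ∀ a b, F.Adj a b → Disjoint (h s(a, b) \ {f a, f b}) (univ.map f))
    (hdisj : F.edgeSet.PairwiseDisjoint fun ε => h ε \ (ε.map f).toFinset) :
    G.IsExpansionWitness F f fun ε => h ε \ (ε.map f).toFinset := by
  unfold IsExpansionWitness
  simp only [Sym2.map_mk, Sym2.toFinset_mk_eq]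
  refine ⟨fun a b hab => ?_, fun a b hab x hx => ?_, hdisj, fun a b hab => ?_⟩
  · rw [card_sdiff_of_subset (hsub a b hab), G.uniform _ (hG a b hab),
      card_pair (f.injective.ne hab.ne)]
  · rintro ⟨c, rfl⟩
    exact disjoint_left.1 (hcore a b hab) hx (mem_map_of_mem f (mem_univ c))
  · rw [insert_eq (f b), ← insert_union, union_sdiff_of_subset (hsub a b hab)]
    exact hG a b hab

theorem containsExpansion_of_forall_tFat {t : ℕ} (G : HyperGraph V r)
    (F : SimpleGraph α) (f : α ↪ V) (ht : (r - 2) * Nat.card F.edgeSet + Fintype.card α ≤ t)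
    (hfat : ∀ a b, F.Adj a b → TFat t G {f a, f b}) : G.ContainsExpansion F := by
  set A : Sym2 α → Finset V := fun ε => (ε.map f).toFinset
  have hA : ∀ a b, A s(a, b) = {f a, f b} := fun a b => by simp [A, Sym2.toFinset_mk_eq]
  have hAB : ∀ ε, A ε ⊆ univ.map f := fun ε x hx => by
    obtain ⟨a, -, rfl⟩ := Sym2.mem_map.1 (Sym2.mem_toFinset.1 hx)
    exact mem_map_of_mem f (mem_univ a)
  have hAcard : ∀ ε ∈ F.edgeFinset, #(A ε) = 2 := Sym2.ind fun a b hab => by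
    rw [hA, card_pair (f.injective.ne (SimpleGraph.mem_edgeFinset.1 hab).ne)]
  have hfat' : ∀ ε ∈ F.edgeFinset, TFat t G (A ε) := Sym2.ind fun a b hab =>
    hA a b ▸ hfat a b (SimpleGraph.mem_edgeFinset.1 hab)
  choose! E hEG htE hsun using hfat'
  have hEcard : ∀ ε ∈ F.edgeFinset, #(univ.map f) + (r - 2) * #F.edgeFinset ≤ #(E ε) := by
    rw [Nat.card_eq_fintype_card, ← SimpleGraph.edgeFinset_card] at ht
    intro ε hε
    have := htE ε hε
    rw [card_map, card_univ]
    omega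
  have hsub : ∀ ε ∈ F.edgeFinset, ∀ e ∈ E ε, A ε ⊆ e := fun ε hε e he => by
    refine IsSunflower.subset (hsun ε hε) ?_ he
    have := card_le_card (hAB ε)
    have := hAcard ε hε
    have := hEcard ε hε
    omega
  obtain ⟨h, hmem, hdisj⟩ := exists_pairwiseDisjoint_petals F.edgeFinset E A (univ.map f) (r - 2)
    (fun ε hε => card_pos.1 (by rw [hAcard ε hε]; omega)) (fun ε _ => hAB ε) hsun
    (fun ε hε e he => by
      rw [card_sdiff_of_subset (hsub ε hε e he), G.uniform e (hEG ε hε he), hAcard ε hε])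
    hEcard
  have hedge : ∀ {a b}, F.Adj a b → s(a, b) ∈ F.edgeFinset := fun hab => F.mem_edgeFinset.2 hab
  have hchosen : ∀ a b, F.Adj a b → h s(a, b) ∈ E s(a, b) := fun a b hab =>
    (hmem _ (hedge hab)).1
  exact ⟨f, _, G.isExpansionWitness_of_petals F f h
    (fun a b hab => hEG _ (hedge hab) (hchosen a b hab))
    (fun a b hab => hA a b ▸ hsub _ (hedge hab) _ (hchosen a b hab))
    (fun a b hab => hA a b ▸ (hmem _ (hedge hab)).2) (by rwa [← SimpleGraph.coe_edgeFinset])⟩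

end HyperGraph

theorem statement_8_general {α V : Type*} [Fintype α] [DecidableEq V]
    (F : SimpleGraph α) (r t : ℕ)
    (ht : t = (r - 2) * Nat.card F.edgeSet + Fintype.card α)
    (G : HyperGraph V r) (hG : ¬ G.ContainsExpansion F) :
    ¬ GraphContains F (fatGraph t G) := by
  rintro ⟨f, hf⟩
  exact hG <| G.containsExpansion_of_forall_tFat F f ht.ge fun a b hab =>
    tFat_of_fatGraph_adj (hf a b hab)

/-- With `t = (r−2)|E(F)| + |V(F)|`, if the `r`-graph `G` is
`F^{(r)+}`-free, then the graph of `t`-fat pairs of `G` is `F`-free. -/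
theorem statement_8 {α V : Type*} [Fintype α] [DecidableEq V]
    (F : SimpleGraph α) (r t : ℕ) (hr : 2 ≤ r)
    (ht : t = (r - 2) * Nat.card F.edgeSet + Fintype.card α)
    (G : HyperGraph V r) (hG : ¬ G.ContainsExpansion F) :
    ¬ GraphContains F (fatGraph t G) :=
  statement_8_general F r t ht G hG
end
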